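/- Let X = (X_1,…,X_m) be independent random variables and g a real-valued function of X. If X^{(i)} denotes X with X_i replaced by an independent copy X'_i, then Var(g(X)) ≤ (1/2)∑_{i=1}^m E[(g(X) − g(X^{(i)}))²] (the Efron–Stein inequality). -/

import Mathlib

/-!
Let `Z⁽ᵏ⁾` be the hybrid point that takes its first `k` coordinates from the copy `X'` and the
others from `X`, so `Z⁽⁰⁾ = X` and `Z⁽ᵐ⁾ = X'`. By independence of `X` and `X'`,
`Var g(X) = E[g(X) (g(X) - g(X'))]`, which telescopes into `∑ᵢ E[g(X) (g(Z⁽ⁱ⁾) - g(Z⁽ⁱ⁺¹⁾))]`.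
Exchanging the `i`-th coordinates of `X` and `X'` preserves the joint law, sends `X` to `X⁽ⁱ⁾`
and swaps `Z⁽ⁱ⁾` with `Z⁽ⁱ⁺¹⁾`; hence the `i`-th term is
`½ E[(g(X) - g(X⁽ⁱ⁾)) (g(Z⁽ⁱ⁾) - g(Z⁽ⁱ⁺¹⁾))]`. AM-GM bounds it by `½ E[(g(X) - g(X⁽ⁱ⁾))²]`,
because `(Z⁽ⁱ⁾, Z⁽ⁱ⁺¹⁾)` has the same law as `(X, X⁽ⁱ⁾)`.
-/

open MeasureTheory ProbabilityTheory Function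

namespace MeasurableEquiv

variable {ι α : Type*} [MeasurableSpace α]

def swapCoords (s : Set ι) [DecidablePred (· ∈ s)] : (ι → α) × (ι → α) ≃ᵐ (ι → α) × (ι → α) :=
  (arrowProdEquivProdArrow α α ι).symm.trans <|
    (piCongrRight fun i ↦ if i ∈ s then prodComm else .refl _).trans (arrowProdEquivProdArrow α α ι)

@[simp]
lemma swapCoords_apply (s : Set ι) [DecidablePred (· ∈ s)] (p : (ι → α) × (ι → α)) :
    swapCoords s p = (s.piecewise p.2 p.1, s.piecewise p.1 p.2) := by
  ext i <;> by_cases hi : i ∈ s <;>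
    simp [swapCoords, hi, arrowProdEquivProdArrow, Equiv.arrowProdEquivProdArrow, piCongrRight,
      prodComm]

lemma measurePreserving_swapCoords [Fintype ι] (ν : ι → Measure α) [∀ i, SigmaFinite (ν i)]
    (s : Set ι) [DecidablePred (· ∈ s)] :
    MeasurePreserving (swapCoords s) ((Measure.pi ν).prod (Measure.pi ν))
      ((Measure.pi ν).prod (Measure.pi ν)) := by
  have hswap : ∀ i, MeasurePreserving
      ⇑(if i ∈ s then prodComm else refl (α × α) : α × α ≃ᵐ α × α)
      ((ν i).prod (ν i)) ((ν i).prod (ν i)) := fun i ↦ by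
    split_ifs
    exacts [Measure.measurePreserving_swap, MeasurePreserving.id _]
  exact (measurePreserving_arrowProdEquivProdArrow α α ι ν ν).comp <|
    (measurePreserving_pi _ _ hswap).comp (measurePreserving_arrowProdEquivProdArrow α α ι ν ν).symm

end MeasurableEquiv

open MeasurableEquiv

lemma integral_mul_le_of_comp_eq_neg {Ω : Type*} [MeasurableSpace Ω] {μ : Measure Ω}
    (σ : Ω ≃ᵐ Ω) (hσ : MeasurePreserving σ μ μ) {a b : Ω → ℝ} (ha : MemLp a 2 μ)
    (hb : MemLp b 2 μ) (hbσ : ∀ ω, b (σ ω) = -b ω) :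
    ∫ ω, a ω * b ω ∂μ ≤ (∫ ω, (a ω - a (σ ω)) ^ 2 ∂μ + ∫ ω, b ω ^ 2 ∂μ) / 4 := by
  have haσ : MemLp (fun ω ↦ a (σ ω)) 2 μ := ha.comp_measurePreserving hσ
  have hσab : ∫ ω, a ω * b ω ∂μ = -∫ ω, a (σ ω) * b ω ∂μ := by
    rw [← integral_neg, ← hσ.integral_comp' fun ω ↦ a ω * b ω]
    simp [hbσ]
  have hab : Integrable (fun ω ↦ a ω * b ω) μ := ha.integrable_mul hb
  have haσb : Integrable (fun ω ↦ a (σ ω) * b ω) μ := haσ.integrable_mul hb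
  have hdiff : 2 * ∫ ω, a ω * b ω ∂μ = ∫ ω, (a ω - a (σ ω)) * b ω ∂μ := by
    simp_rw [sub_mul]
    rw [integral_sub hab haσb]
    linarith
  have hd2 : Integrable (fun ω ↦ (a ω - a (σ ω)) ^ 2) μ := (ha.sub haσ).integrable_sq
  have hamgm : ∫ ω, (a ω - a (σ ω)) * b ω ∂μ ≤ ∫ ω, ((a ω - a (σ ω)) ^ 2 + b ω ^ 2) / 2 ∂μ :=
    integral_mono ((ha.sub haσ).integrable_mul hb) ((hd2.add hb.integrable_sq).div_const 2)
      fun ω ↦ by linarith [two_mul_le_add_sq (a ω - a (σ ω)) (b ω)]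
  rw [integral_div, integral_add hd2 hb.integrable_sq] at hamgm
  linarith

lemma variance_comp_fst_eq_integral_mul_sub {Ω : Type*} [MeasurableSpace Ω] {π : Measure Ω}
    [IsProbabilityMeasure π] {f : Ω → ℝ} (hf : MemLp (fun p : Ω × Ω ↦ f p.1) 2 (π.prod π)) :
    variance (fun p ↦ f p.1) (π.prod π) = ∫ p, f p.1 * (f p.1 - f p.2) ∂(π.prod π) := by
  have hf' : MemLp (fun p : Ω × Ω ↦ f p.2) 2 (π.prod π) :=
    hf.comp_measurePreserving Measure.measurePreserving_swap
  have hff : Integrable (fun p : Ω × Ω ↦ f p.1 * f p.1) (π.prod π) := hf.integrable_mul hf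
  have hff' : Integrable (fun p : Ω × Ω ↦ f p.1 * f p.2) (π.prod π) := hf.integrable_mul hf'
  simp_rw [mul_sub]
  rw [variance_eq_sub hf, integral_sub hff hff', integral_prod_mul, integral_fun_fst]
  simp [sq]

section Hybrid

variable {α : Type*} {m : ℕ}

def hybrid (k : ℕ) (p : (Fin m → α) × (Fin m → α)) : Fin m → α :=
  {j : Fin m | (j : ℕ) < k}.piecewise p.2 p.1

lemma hybrid_zero (p : (Fin m → α) × (Fin m → α)) : hybrid 0 p = p.1 := by
  ext j; simp [hybrid]

lemma hybrid_of_le {k : ℕ} (hk : m ≤ k) (p : (Fin m → α) × (Fin m → α)) : hybrid k p = p.2 := by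
  ext j; simp [hybrid, j.isLt.trans_le hk]

lemma sum_sub_hybrid {G : Type*} [AddCommGroup G] (f : (Fin m → α) → G)
    (p : (Fin m → α) × (Fin m → α)) :
    ∑ i : Fin m, (f (hybrid i p) - f (hybrid (i + 1) p)) = f p.1 - f p.2 := by
  rw [Fin.sum_univ_eq_sum_range (fun k ↦ f (hybrid k p) - f (hybrid (k + 1) p)),
    Finset.sum_range_sub', hybrid_zero, hybrid_of_le le_rfl]

variable [MeasurableSpace α]

lemma hybrid_swapCoords_singleton (i : Fin m) (p : (Fin m → α) × (Fin m → α)) :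
    hybrid i (swapCoords {i} p) = hybrid (i + 1) p := by
  ext j
  simp only [hybrid, swapCoords_apply, Set.piecewise, Set.mem_ofPred_eq, Set.mem_singleton_iff,
    Fin.ext_iff]
  split_ifs <;> first | rfl | omega

lemma hybrid_succ_swapCoords_singleton (i : Fin m) (p : (Fin m → α) × (Fin m → α)) :
    hybrid (i + 1) (swapCoords {i} p) = hybrid i p := by
  ext j
  simp only [hybrid, swapCoords_apply, Set.piecewise, Set.mem_ofPred_eq, Set.mem_singleton_iff,
    Fin.ext_iff]
  split_ifs <;> first | rfl | omega

lemma fst_swapCoords_singleton_swapCoords_lt (i : Fin m) (p : (Fin m → α) × (Fin m → α)) :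
    (swapCoords {i} (swapCoords {j : Fin m | (j : ℕ) < i} p)).1 = hybrid (i + 1) p := by
  ext j
  simp only [hybrid, swapCoords_apply, Set.piecewise, Set.mem_ofPred_eq, Set.mem_singleton_iff,
    Fin.ext_iff]
  split_ifs <;> first | rfl | omega

lemma fst_swapCoords_setOf_lt (k : ℕ) (p : (Fin m → α) × (Fin m → α)) :
    (swapCoords {j : Fin m | (j : ℕ) < k} p).1 = hybrid k p := by
  simp [hybrid]

variable (ν : Fin m → Measure α) [∀ i, SigmaFinite (ν i)] {g : (Fin m → α) → ℝ}

lemma memLp_comp_hybrid (hg : MemLp (fun p ↦ g p.1) 2 ((Measure.pi ν).prod (Measure.pi ν)))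
    (k : ℕ) : MemLp (fun p ↦ g (hybrid k p)) 2 ((Measure.pi ν).prod (Measure.pi ν)) := by
  simpa only [comp_def, fst_swapCoords_setOf_lt] using
    hg.comp_measurePreserving (measurePreserving_swapCoords ν {j : Fin m | (j : ℕ) < k})

lemma integral_mul_sub_hybrid_le
    (hg : MemLp (fun p ↦ g p.1) 2 ((Measure.pi ν).prod (Measure.pi ν))) (i : Fin m) :
    ∫ p, g p.1 * (g (hybrid i p) - g (hybrid (i + 1) p)) ∂(Measure.pi ν).prod (Measure.pi ν) ≤
      1 / 2 * ∫ p, (g p.1 - g (update p.1 i (p.2 i))) ^ 2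
        ∂(Measure.pi ν).prod (Measure.pi ν) := by
  have hupdate : ∀ p : (Fin m → α) × (Fin m → α), update p.1 i (p.2 i) = (swapCoords {i} p).1 :=
    fun p ↦ by simp [Set.piecewise_singleton]
  have hb2 : ∫ p, (g (hybrid i p) - g (hybrid (i + 1) p)) ^ 2 ∂(Measure.pi ν).prod (Measure.pi ν) =
      ∫ p, (g p.1 - g (update p.1 i (p.2 i))) ^ 2 ∂(Measure.pi ν).prod (Measure.pi ν) := by
    conv_rhs => rw [← (measurePreserving_swapCoords ν {j : Fin m | (j : ℕ) < i}).integral_comp']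
    simp_rw [hupdate, fst_swapCoords_singleton_swapCoords_lt, fst_swapCoords_setOf_lt]
  have hb : MemLp (fun p ↦ g (hybrid i p) - g (hybrid (i + 1) p)) 2
      ((Measure.pi ν).prod (Measure.pi ν)) :=
    (memLp_comp_hybrid ν hg i).sub (memLp_comp_hybrid ν hg (i + 1))
  have h := integral_mul_le_of_comp_eq_neg _ (measurePreserving_swapCoords ν {i}) hg hb
    fun p ↦ by rw [hybrid_swapCoords_singleton, hybrid_succ_swapCoords_singleton, neg_sub]
  simp only [← hupdate] at h
  linarith

end Hybrid

theorem stmt_8_general {𝒳 : Type*} [MeasurableSpace 𝒳] {m : ℕ}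
    (ν : Fin m → Measure 𝒳) [∀ i, IsProbabilityMeasure (ν i)]
    (g : (Fin m → 𝒳) → ℝ)
    (hg2 : MemLp (fun ω : (Fin m → 𝒳) × (Fin m → 𝒳) => g ω.1) 2
      ((Measure.pi ν).prod (Measure.pi ν))) :
    variance (fun ω : (Fin m → 𝒳) × (Fin m → 𝒳) => g ω.1)
        ((Measure.pi ν).prod (Measure.pi ν))
      ≤ (1 / 2) * ∑ i, ∫ ω, (g ω.1 - g (Function.update ω.1 i (ω.2 i))) ^ 2
          ∂((Measure.pi ν).prod (Measure.pi ν)) := by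
  have hint : ∀ i : Fin m, Integrable (fun p ↦ g p.1 * (g (hybrid i p) - g (hybrid (i + 1) p)))
      ((Measure.pi ν).prod (Measure.pi ν)) := fun i ↦
    hg2.integrable_mul ((memLp_comp_hybrid ν hg2 i).sub (memLp_comp_hybrid ν hg2 (i + 1)))
  calc variance (fun ω ↦ g ω.1) ((Measure.pi ν).prod (Measure.pi ν))
      = ∫ p, g p.1 * (g p.1 - g p.2) ∂(Measure.pi ν).prod (Measure.pi ν) :=
        variance_comp_fst_eq_integral_mul_sub hg2
    _ = ∑ i : Fin m, ∫ p, g p.1 * (g (hybrid i p) - g (hybrid (i + 1) p))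
          ∂(Measure.pi ν).prod (Measure.pi ν) := by
        rw [← integral_finsetSum _ fun i _ ↦ hint i]
        simp_rw [← Finset.mul_sum, sum_sub_hybrid]
    _ ≤ ∑ i : Fin m, 1 / 2 * ∫ p, (g p.1 - g (update p.1 i (p.2 i))) ^ 2
          ∂(Measure.pi ν).prod (Measure.pi ν) :=
        Finset.sum_le_sum fun i _ ↦ integral_mul_sub_hybrid_le ν hg2 i
    _ = _ := (Finset.mul_sum ..).symm

/-- Efron–Stein inequality: for independent random variables `X = (X₁,…,X_m)` (modeled
on a product probability space, with an independent copy `X'` on a second factor),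
`Var(g(X)) ≤ (1/2) ∑ᵢ E[(g(X) − g(X⁽ⁱ⁾))²]`, where `X⁽ⁱ⁾` replaces `Xᵢ` by `X'ᵢ`. -/
theorem stmt_8 {𝒳 : Type*} [MeasurableSpace 𝒳] {m : ℕ}
    (ν : Fin m → Measure 𝒳) [∀ i, IsProbabilityMeasure (ν i)]
    (g : (Fin m → 𝒳) → ℝ) (hg : Measurable g)
    (hg2 : MemLp (fun ω : (Fin m → 𝒳) × (Fin m → 𝒳) => g ω.1) 2
      ((Measure.pi ν).prod (Measure.pi ν))) :
    variance (fun ω : (Fin m → 𝒳) × (Fin m → 𝒳) => g ω.1)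
        ((Measure.pi ν).prod (Measure.pi ν))
      ≤ (1 / 2) * ∑ i, ∫ ω, (g ω.1 - g (Function.update ω.1 i (ω.2 i))) ^ 2
          ∂((Measure.pi ν).prod (Measure.pi ν)) :=
  stmt_8_general ν g hg2
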